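/- arXiv:2409.19840 — 2 statements merged into one kernel-verified Lean document; each statement's English description precedes it below -/
import Mathlib

section
/- Let u₋, u₊ be unit vectors in ℝᵈ with ‖u₋‖ = ‖u₊‖ = 1 and u₋ ≠ u₊. Define the objective f(θ) = (1 + θᵀu₋)² + (1 − θᵀu₊)² on the unit sphere {θ : ‖θ‖ = 1}. Then θ* = (u₊ − u₋)/‖u₊ − u₋‖ is a minimizer of f over the unit sphere. -/
open scoped RealInnerProductSpace

/-- Theorem 1: θ* = (up − um)/‖up − um‖ minimizes
f(θ) = (1 + θᵀum)² + (1 − θᵀup)² over the unit sphere, for unit vectors um ≠ up. -/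
theorem stmt_0 {d : ℕ} (um up : EuclideanSpace ℝ (Fin d))
    (hm : ‖um‖ = 1) (hp : ‖up‖ = 1) (hne : um ≠ up) :
    ∀ θ : EuclideanSpace ℝ (Fin d), ‖θ‖ = 1 →
      (1 + ⟪(‖up - um‖)⁻¹ • (up - um), um⟫) ^ 2
        + (1 - ⟪(‖up - um‖)⁻¹ • (up - um), up⟫) ^ 2
      ≤ (1 + ⟪θ, um⟫) ^ 2 + (1 - ⟪θ, up⟫) ^ 2 := by
  intro θ hθ
  set s : ℝ := ‖up - um‖ with hsdef
  have hs : 0 < s := by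
    rw [hsdef, norm_pos_iff, sub_ne_zero]
    exact fun h => hne h.symm
  have hs2 : s ^ 2 = 2 - 2 * ⟪um, up⟫ := by
    rw [hsdef, ← real_inner_self_eq_norm_sq]
    rw [inner_sub_sub_self, real_inner_self_eq_norm_sq, real_inner_self_eq_norm_sq,
      hm, hp, real_inner_comm up um]
    ring
  have hc : |⟪um, up⟫| ≤ 1 := by
    have := abs_real_inner_le_norm um up
    rwa [hm, hp, one_mul] at this
  have hsle : s ≤ 2 := by nlinarith [abs_le.mp hc]
  have key : ⟪up, um⟫ = 1 - s ^ 2 / 2 := by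
    rw [real_inner_comm]; linarith
  have key2 : ⟪um, up⟫ = 1 - s ^ 2 / 2 := by linarith
  have h1 : ⟪(s)⁻¹ • (up - um), um⟫ = -(s / 2) := by
    rw [real_inner_smul_left, inner_sub_left, real_inner_self_eq_norm_sq, hm, key]
    field_simp
    ring
  have h2 : ⟪(s)⁻¹ • (up - um), up⟫ = s / 2 := by
    rw [real_inner_smul_left, inner_sub_left, real_inner_self_eq_norm_sq, hp, key2]
    field_simp
    ring
  rw [h1, h2]
  have hab : ⟪θ, up⟫ - ⟪θ, um⟫ ≤ s := by
    have := real_inner_le_norm θ (up - um)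
    rwa [inner_sub_right, hθ, one_mul] at this
  have ha : |⟪θ, um⟫| ≤ 1 := by
    have := abs_real_inner_le_norm θ um
    rwa [hθ, hm, one_mul] at this
  have hb : |⟪θ, up⟫| ≤ 1 := by
    have := abs_real_inner_le_norm θ up
    rwa [hθ, hp, one_mul] at this
  obtain ⟨ha1, ha2⟩ := abs_le.mp ha
  obtain ⟨hb1, hb2⟩ := abs_le.mp hb
  nlinarith [sq_nonneg (⟪θ, um⟫ + ⟪θ, up⟫), sq_nonneg (s - (⟪θ, up⟫ - ⟪θ, um⟫)),
    sq_nonneg (⟪θ, um⟫ - ⟪θ, up⟫ + s)]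
end

section
/- Let u₋ ≠ u₊ be unit vectors in ℝᵈ and let f(θ) = (1 + θᵀu₋)² + (1 − θᵀu₊)² restricted to the unit sphere. Then the minimum value of f over the unit sphere equals 2·(1 − ‖u₊ − u₋‖/2)² = 2·(1 − s)² where s = ‖u₊ − u₋‖/2, attained at θ* = (u₊ − u₋)/‖u₊ − u₋‖. -/
open scoped RealInnerProductSpace

/-- Minimum value of f(θ) = (1 + θᵀum)² + (1 − θᵀup)² over the unit sphere is
2(1 − s)² with s = ‖up − um‖/2, attained at θ* = (up − um)/‖up − um‖. -/
theorem stmt_16 {d : ℕ} (um up : EuclideanSpace ℝ (Fin d))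
    (hm : ‖um‖ = 1) (hp : ‖up‖ = 1) (hne : um ≠ up) :
    (1 + ⟪(‖up - um‖)⁻¹ • (up - um), um⟫) ^ 2
        + (1 - ⟪(‖up - um‖)⁻¹ • (up - um), up⟫) ^ 2
      = 2 * (1 - ‖up - um‖ / 2) ^ 2 ∧
    ∀ θ : EuclideanSpace ℝ (Fin d), ‖θ‖ = 1 →
      2 * (1 - ‖up - um‖ / 2) ^ 2 ≤ (1 + ⟪θ, um⟫) ^ 2 + (1 - ⟪θ, up⟫) ^ 2 := by
  set r := ‖up - um‖ with hrdef
  have hr : 0 < r := norm_pos_iff.mpr (sub_ne_zero.mpr (Ne.symm hne))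
  have hmm : ⟪um, um⟫ = 1 := by
    rw [real_inner_self_eq_norm_sq, hm]; norm_num
  have hpp : ⟪up, up⟫ = 1 := by
    rw [real_inner_self_eq_norm_sq, hp]; norm_num
  have hr2 : r ^ 2 = 2 - 2 * ⟪up, um⟫ := by
    rw [hrdef, ← real_inner_self_eq_norm_sq]
    rw [inner_sub_left, inner_sub_right, inner_sub_right, hmm, hpp,
      real_inner_comm up um]
    ring
  have hrle : r ≤ 2 := by
    have := norm_sub_le up um
    rw [hm, hp] at this; linarith
  constructor
  · have h1 : ⟪up - um, um⟫ = ⟪up, um⟫ - 1 := by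
      rw [inner_sub_left, hmm]
    have h2 : ⟪up - um, up⟫ = 1 - ⟪up, um⟫ := by
      rw [inner_sub_left, hpp, real_inner_comm um up]
    rw [real_inner_smul_left, real_inner_smul_left, h1, h2]
    have : ⟪up, um⟫ = 1 - r ^ 2 / 2 := by linarith
    rw [this]
    field_simp
    ring
  · intro θ hθ
    have hcs : ⟪θ, up - um⟫ ≤ r := by
      calc ⟪θ, up - um⟫ ≤ ‖θ‖ * ‖up - um‖ := real_inner_le_norm θ (up - um)
        _ = r := by rw [hθ, one_mul]
    rw [inner_sub_right] at hcs
    set a := ⟪θ, um⟫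
    set b := ⟪θ, up⟫
    nlinarith [sq_nonneg (a + b), sq_nonneg (b - a - r), mul_nonneg (sub_nonneg.mpr hcs) (sub_nonneg.mpr hrle), sq_nonneg (1 - r/2)]
end
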